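/- Let n ≥ 1, x₀ ∈ ℝⁿ, λ ∈ ℝ, and let u be a real-valued C² function on ℝⁿ. Set φ(x) := ½|x − x₀|² and v := e^{λφ} u. Define the vector field F on ℝⁿ with components F^j := 2λ (x_j − x₀ⱼ) |∇v|² − 4λ ((x − x₀)·∇v) v_j − 2λ n v_j v − 2λ³ |x − x₀|² (x_j − x₀ⱼ) v² + 2λ² n (x_j − x₀ⱼ) v². Then at every point x ∈ ℝⁿ: e^{2λφ(x)} |Δu(x)|² ≥ 4λ |∇v(x)|² + 4λ³ |x − x₀|² v(x)² − 2λ² n² v(x)² + ∑_{j=1}^n ∂_j F^j(x). In particular, if λ ≥ n², then at every point x with |x − x₀| ≥ 1: e^{2λφ(x)} |Δu(x)|² ≥ 4λ |∇v(x)|² + 2λ³ v(x)² + ∑_{j=1}^n ∂_j F^j(x). -/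

import Mathlib

/-- Partial derivative `∂_j` of a real-valued function on `ℝⁿ`. -/
noncomputable def pd {n : ℕ} (j : Fin n) (w : (Fin n → ℝ) → ℝ) : (Fin n → ℝ) → ℝ :=
  fun x => fderiv ℝ w x (Pi.single j 1)

/-- The quadratic phase `φ(x) := ½|x − x₀|²`. -/
noncomputable def phi {n : ℕ} (x₀ : Fin n → ℝ) : (Fin n → ℝ) → ℝ :=
  fun x => (1 / 2 : ℝ) * ∑ j, (x j - x₀ j) ^ 2

/-- The conjugated function `v := e^{λφ} u`. -/
noncomputable def conjV {n : ℕ} (x₀ : Fin n → ℝ) (lam : ℝ) (u : (Fin n → ℝ) → ℝ) :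
    (Fin n → ℝ) → ℝ :=
  fun x => Real.exp (lam * phi x₀ x) * u x

/-- The vector field `F^j` of the elliptic pointwise Carleman estimate:
`F^j := 2λ(x_j − x₀ⱼ)|∇v|² − 4λ((x−x₀)·∇v)v_j − 2λn v_j v
        − 2λ³|x−x₀|²(x_j − x₀ⱼ)v² + 2λ²n(x_j − x₀ⱼ)v²`, with `v := e^{λφ}u`. -/
noncomputable def ellF {n : ℕ} (x₀ : Fin n → ℝ) (lam : ℝ) (u : (Fin n → ℝ) → ℝ)
    (j : Fin n) : (Fin n → ℝ) → ℝ :=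
  fun x =>
    2 * lam * (x j - x₀ j) * (∑ k, (pd k (conjV x₀ lam u) x) ^ 2)
      - 4 * lam * (∑ k, (x k - x₀ k) * pd k (conjV x₀ lam u) x)
          * pd j (conjV x₀ lam u) x
      - 2 * lam * (n : ℝ) * pd j (conjV x₀ lam u) x * conjV x₀ lam u x
      - 2 * lam ^ 3 * (∑ k, (x k - x₀ k) ^ 2) * (x j - x₀ j)
          * (conjV x₀ lam u x) ^ 2
      + 2 * lam ^ 2 * (n : ℝ) * (x j - x₀ j) * (conjV x₀ lam u x) ^ 2

/-!
With `v = e^{λφ} u` and `y = x - x₀`, one has `e^{λφ} Δu = P + Q` where `P = Δv + λ²|y|² v` and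
`Q = -2λ y·∇v - λ n v`. The field is `F^j = y_j A - B ∂_j v` with `A = 2λ|∇v|² - 2λ³|y|²v² + 2λ²n v²`
and `B = 4λ y·∇v + 2λ n v`, so `div F = n A + y·∇A - ∇B·∇v - B Δv`. The Hessian terms
`4λ ∑ y_j ∂_k v ∂_j∂_k v` coming from `y·∇A` and from `∇B·∇v` cancel by the symmetry of the Hessian,
and one finds the exact identity
`e^{2λφ}|Δu|² = 4λ|∇v|² + 4λ³|y|²v² - 2λ²n²v² + div F + P² + (2λ y·∇v)² + (λ n v)²`.
Dropping the squares gives the estimate; when `λ ≥ n²` and `|y| ≥ 1` the zeroth-order terms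
dominate `2λ³v²`.
-/

open Finset

section PartialDeriv

variable {n : ℕ} {f g : (Fin n → ℝ) → ℝ} {x : Fin n → ℝ} {j : Fin n}

theorem pd_add (hf : DifferentiableAt ℝ f x) (hg : DifferentiableAt ℝ g x) :
    pd j (fun y => f y + g y) x = pd j f x + pd j g x := by
  simp [pd, fderiv_fun_add hf hg]

theorem pd_sub (hf : DifferentiableAt ℝ f x) (hg : DifferentiableAt ℝ g x) :
    pd j (fun y => f y - g y) x = pd j f x - pd j g x := by
  simp [pd, fderiv_fun_sub hf hg]

theorem pd_mul (hf : DifferentiableAt ℝ f x) (hg : DifferentiableAt ℝ g x) :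
    pd j (fun y => f y * g y) x = f x * pd j g x + pd j f x * g x := by
  simp [pd, fderiv_fun_mul hf hg]; ring

theorem pd_pow_two (hf : DifferentiableAt ℝ f x) :
    pd j (fun y => f y ^ 2) x = 2 * f x * pd j f x := by
  simp [pd, fderiv_fun_pow 2 hf]

theorem pd_const (c : ℝ) : pd j (fun _ => c) x = 0 := by
  simp [pd]

theorem pd_sum {ι : Type*} (s : Finset ι) (F : ι → (Fin n → ℝ) → ℝ)
    (h : ∀ i ∈ s, DifferentiableAt ℝ (F i) x) :
    pd j (fun y => ∑ i ∈ s, F i y) x = ∑ i ∈ s, pd j (F i) x := by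
  simp [pd, fderiv_fun_sum h]

theorem pd_apply (k : Fin n) : pd j (fun y => y k) x = if k = j then 1 else 0 := by
  simp [pd, (hasFDerivAt_apply k x).fderiv, Pi.single_apply]

theorem pd_exp (hf : DifferentiableAt ℝ f x) :
    pd j (fun y => Real.exp (f y)) x = Real.exp (f x) * pd j f x := by
  simp [pd, fderiv_exp hf]

theorem contDiff_pd {m : ℕ∞} (hf : ContDiff ℝ (m + 1) f) (j : Fin n) :
    ContDiff ℝ m (pd j f) :=
  (hf.fderiv_right le_rfl).clm_apply contDiff_const

theorem pd_comm (hf : ContDiff ℝ 2 f) (j k : Fin n) : pd j (pd k f) x = pd k (pd j f) x := by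
  have hd : DifferentiableAt ℝ (fderiv ℝ f) x :=
    (hf.fderiv_right (m := 1) le_rfl).differentiable one_ne_zero x
  have second (a b : Fin n) :
      pd a (pd b f) x = fderiv ℝ (fderiv ℝ f) x (Pi.single a 1) (Pi.single b 1) := by
    change fderiv ℝ (fun y => fderiv ℝ f y (Pi.single b 1)) x (Pi.single a 1) = _
    simp [fderiv_clm_apply hd (differentiableAt_const _)]
  rw [second, second]
  exact hf.contDiffAt.isSymmSndFDerivAt (by simp) _ _

end PartialDeriv

section Divergence

variable {n : ℕ} (x₀ : Fin n → ℝ) {w g h : (Fin n → ℝ) → ℝ} {x : Fin n → ℝ}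

theorem pd_sum_sub_sq (j : Fin n) : pd j (fun y => ∑ k, (y k - x₀ k) ^ 2) x = 2 * (x j - x₀ j) := by
  simp (disch := fun_prop) only [pd_sum, pd_pow_two, pd_sub, pd_apply, pd_const]
  simp

theorem pd_sum_sq_pd (hw : ∀ k, DifferentiableAt ℝ (pd k w) x) (j : Fin n) :
    pd j (fun y => ∑ k, pd k w y ^ 2) x = 2 * ∑ k, pd k w x * pd j (pd k w) x := by
  simp (disch := fun_prop) only [pd_sum, pd_pow_two, mul_sum, mul_assoc]

theorem pd_sum_sub_mul_pd (hw : ∀ k, DifferentiableAt ℝ (pd k w) x) (j : Fin n) :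
    pd j (fun y => ∑ k, (y k - x₀ k) * pd k w y) x
      = pd j w x + ∑ k, (x k - x₀ k) * pd j (pd k w) x := by
  simp (disch := fun_prop) only [pd_sum, pd_mul, pd_sub, pd_apply, pd_const]
  simp [sum_add_distrib, add_comm]

theorem sum_pd_sub_mul (hg : DifferentiableAt ℝ g x) :
    ∑ j, pd j (fun y => (y j - x₀ j) * g y) x = n * g x + ∑ j, (x j - x₀ j) * pd j g x := by
  simp (disch := fun_prop) only [pd_mul, pd_sub, pd_apply, pd_const]
  simp [sum_add_distrib, add_comm]

theorem sum_pd_mul_pd (hh : DifferentiableAt ℝ h x) (hw : ∀ k, DifferentiableAt ℝ (pd k w) x) :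
    ∑ j, pd j (fun y => h y * pd j w y) x
      = ∑ j, pd j h x * pd j w x + h x * ∑ j, pd j (pd j w) x := by
  simp (disch := fun_prop) only [pd_mul, sum_add_distrib, mul_sum]
  ring

theorem sum_sub_mul_sum_pd_mul_pd_pd (hw : ContDiff ℝ 2 w) :
    ∑ j, (x j - x₀ j) * ∑ k, pd k w x * pd j (pd k w) x
      = ∑ j, pd j w x * ∑ k, (x k - x₀ k) * pd j (pd k w) x := by
  simp only [mul_sum]
  rw [sum_comm]
  refine sum_congr rfl fun j _ => sum_congr rfl fun k _ => ?_
  rw [pd_comm hw k j]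
  ring

end Divergence

section Conjugation

variable {n : ℕ} (x₀ : Fin n → ℝ) (lam : ℝ) {u : (Fin n → ℝ) → ℝ}

@[fun_prop]
theorem contDiff_phi {m : WithTop ℕ∞} : ContDiff ℝ m (phi x₀) := by
  unfold phi; fun_prop

@[fun_prop]
theorem differentiable_phi : Differentiable ℝ (phi x₀) := by
  unfold phi; fun_prop

theorem contDiff_conjV {m : WithTop ℕ∞} (hu : ContDiff ℝ m u) : ContDiff ℝ m (conjV x₀ lam u) := by
  unfold conjV; fun_prop

theorem pd_phi (j : Fin n) (x : Fin n → ℝ) : pd j (phi x₀) x = x j - x₀ j := by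
  unfold phi
  simp (disch := fun_prop) only [pd_mul, pd_const, pd_sum_sub_sq]
  ring

theorem pd_conjV {x : Fin n → ℝ} (hu : DifferentiableAt ℝ u x) (j : Fin n) :
    pd j (conjV x₀ lam u) x
      = lam * (x j - x₀ j) * conjV x₀ lam u x + Real.exp (lam * phi x₀ x) * pd j u x := by
  unfold conjV
  simp (disch := fun_prop) only [pd_mul, pd_exp, pd_const, pd_phi]
  ring

theorem exp_mul_pd_pd_eq (hu : ContDiff ℝ 2 u) (j : Fin n) (x : Fin n → ℝ) :
    Real.exp (lam * phi x₀ x) * pd j (pd j u) x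
      = pd j (pd j (conjV x₀ lam u)) x - 2 * lam * (x j - x₀ j) * pd j (conjV x₀ lam u) x
        + (lam ^ 2 * (x j - x₀ j) ^ 2 - lam) * conjV x₀ lam u x := by
  have hu1 : Differentiable ℝ u := hu.differentiable (by simp)
  have hdu : Differentiable ℝ (pd j u) := (contDiff_pd (m := 1) hu j).differentiable (by simp)
  have hv : Differentiable ℝ (conjV x₀ lam u) := (contDiff_conjV x₀ lam hu).differentiable (by simp)
  have hpdv : pd j (conjV x₀ lam u)
      = fun y => lam * (y j - x₀ j) * conjV x₀ lam u y + Real.exp (lam * phi x₀ y) * pd j u y :=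
    funext fun y => pd_conjV x₀ lam (hu1 y) j
  rw [hpdv]
  simp (disch := fun_prop) only [pd_add, pd_mul, pd_sub, pd_apply, pd_const, pd_exp, pd_phi,
    pd_conjV x₀ lam (hu1 x), if_true]
  ring

theorem exp_mul_laplacian_eq (hu : ContDiff ℝ 2 u) (x : Fin n → ℝ) :
    Real.exp (lam * phi x₀ x) * ∑ j, pd j (pd j u) x
      = ∑ j, pd j (pd j (conjV x₀ lam u)) x
        - 2 * lam * ∑ j, (x j - x₀ j) * pd j (conjV x₀ lam u) x
        + (lam ^ 2 * ∑ j, (x j - x₀ j) ^ 2 - lam * n) * conjV x₀ lam u x := by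
  simp only [mul_sum, exp_mul_pd_pd_eq x₀ lam hu, sum_add_distrib, sum_sub_distrib, ← sum_mul,
    mul_assoc, sum_const, card_univ, Fintype.card_fin, nsmul_eq_mul]
  ring

end Conjugation

section CarlemanField

variable {n : ℕ} (x₀ : Fin n → ℝ) (lam : ℝ) {u w : (Fin n → ℝ) → ℝ} {x : Fin n → ℝ}

noncomputable def radialCoeff (w : (Fin n → ℝ) → ℝ) : (Fin n → ℝ) → ℝ := fun y =>
  2 * lam * ∑ k, pd k w y ^ 2 - 2 * lam ^ 3 * (∑ k, (y k - x₀ k) ^ 2) * w y ^ 2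
    + 2 * lam ^ 2 * n * w y ^ 2

noncomputable def gradCoeff (w : (Fin n → ℝ) → ℝ) : (Fin n → ℝ) → ℝ := fun y =>
  4 * lam * ∑ k, (y k - x₀ k) * pd k w y + 2 * lam * n * w y

theorem ellF_eq (u : (Fin n → ℝ) → ℝ) (j : Fin n) :
    ellF x₀ lam u j = fun y => (y j - x₀ j) * radialCoeff x₀ lam (conjV x₀ lam u) y
      - gradCoeff x₀ lam (conjV x₀ lam u) y * pd j (conjV x₀ lam u) y := by
  funext y
  simp only [ellF, radialCoeff, gradCoeff]
  ring

theorem differentiableAt_radialCoeff (hw : DifferentiableAt ℝ w x)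
    (hpd : ∀ k, DifferentiableAt ℝ (pd k w) x) : DifferentiableAt ℝ (radialCoeff x₀ lam w) x := by
  unfold radialCoeff; fun_prop

theorem differentiableAt_gradCoeff (hw : DifferentiableAt ℝ w x)
    (hpd : ∀ k, DifferentiableAt ℝ (pd k w) x) : DifferentiableAt ℝ (gradCoeff x₀ lam w) x := by
  unfold gradCoeff; fun_prop

theorem sum_sub_mul_pd_radialCoeff (hw : DifferentiableAt ℝ w x)
    (hpd : ∀ k, DifferentiableAt ℝ (pd k w) x) :
    ∑ j, (x j - x₀ j) * pd j (radialCoeff x₀ lam w) x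
      = 4 * lam * ∑ j, (x j - x₀ j) * ∑ k, pd k w x * pd j (pd k w) x
        - 4 * lam ^ 3 * w x ^ 2 * ∑ j, (x j - x₀ j) ^ 2
        - (4 * lam ^ 3 * (∑ k, (x k - x₀ k) ^ 2) * w x - 4 * lam ^ 2 * n * w x)
          * ∑ j, (x j - x₀ j) * pd j w x := by
  calc _ = ∑ j, (4 * lam * ((x j - x₀ j) * ∑ k, pd k w x * pd j (pd k w) x)
        - 4 * lam ^ 3 * w x ^ 2 * (x j - x₀ j) ^ 2
        - (4 * lam ^ 3 * (∑ k, (x k - x₀ k) ^ 2) * w x - 4 * lam ^ 2 * n * w x)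
          * ((x j - x₀ j) * pd j w x)) := by
        refine sum_congr rfl fun j _ => ?_
        unfold radialCoeff
        simp (disch := fun_prop) only [pd_add, pd_sub, pd_mul, pd_const, pd_pow_two,
          pd_sum_sq_pd hpd, pd_sum_sub_sq]
        ring
    _ = _ := by simp only [sum_sub_distrib, ← mul_sum]

theorem sum_pd_gradCoeff_mul_pd (hw : DifferentiableAt ℝ w x)
    (hpd : ∀ k, DifferentiableAt ℝ (pd k w) x) :
    ∑ j, pd j (gradCoeff x₀ lam w) x * pd j w x
      = 4 * lam * ∑ j, pd j w x * ∑ k, (x k - x₀ k) * pd j (pd k w) x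
        + (4 * lam + 2 * lam * n) * ∑ j, pd j w x ^ 2 := by
  calc _ = ∑ j, (4 * lam * (pd j w x * ∑ k, (x k - x₀ k) * pd j (pd k w) x)
        + (4 * lam + 2 * lam * n) * pd j w x ^ 2) := by
        refine sum_congr rfl fun j _ => ?_
        unfold gradCoeff
        simp (disch := fun_prop) only [pd_add, pd_mul, pd_const, pd_sum_sub_mul_pd x₀ hpd]
        ring
    _ = _ := by simp only [sum_add_distrib, ← mul_sum]

theorem sum_pd_ellF (hv : ContDiff ℝ 2 (conjV x₀ lam u)) (x : Fin n → ℝ) :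
    ∑ j, pd j (ellF x₀ lam u j) x
      = - 4 * lam * ∑ j, pd j (conjV x₀ lam u) x ^ 2
        - (4 * lam * ∑ j, (x j - x₀ j) * pd j (conjV x₀ lam u) x + 2 * lam * n * conjV x₀ lam u x)
          * ∑ j, pd j (pd j (conjV x₀ lam u)) x
        - 2 * lam ^ 3 * (n + 2) * (∑ j, (x j - x₀ j) ^ 2) * conjV x₀ lam u x ^ 2
        - (4 * lam ^ 3 * ∑ j, (x j - x₀ j) ^ 2 - 4 * lam ^ 2 * n) * conjV x₀ lam u x
          * ∑ j, (x j - x₀ j) * pd j (conjV x₀ lam u) x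
        + 2 * lam ^ 2 * n ^ 2 * conjV x₀ lam u x ^ 2 := by
  have hv1 : DifferentiableAt ℝ (conjV x₀ lam u) x := hv.differentiable (by simp) x
  have hv2 (k : Fin n) : DifferentiableAt ℝ (pd k (conjV x₀ lam u)) x :=
    (contDiff_pd (m := 1) hv k).differentiable (by simp) x
  have hA := differentiableAt_radialCoeff x₀ lam hv1 hv2
  have hB := differentiableAt_gradCoeff x₀ lam hv1 hv2
  simp only [ellF_eq]
  simp (disch := fun_prop) only [pd_sub, sum_sub_distrib, sum_pd_sub_mul, sum_pd_mul_pd]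
  rw [sum_sub_mul_pd_radialCoeff x₀ lam hv1 hv2, sum_pd_gradCoeff_mul_pd x₀ lam hv1 hv2,
    sum_sub_mul_sum_pd_mul_pd_pd x₀ hv]
  simp only [radialCoeff, gradCoeff]
  ring

theorem carleman_identity (hu : ContDiff ℝ 2 u) (x : Fin n → ℝ) :
    Real.exp (2 * lam * phi x₀ x) * (∑ j, pd j (pd j u) x) ^ 2
      = 4 * lam * ∑ j, pd j (conjV x₀ lam u) x ^ 2
        + 4 * lam ^ 3 * (∑ j, (x j - x₀ j) ^ 2) * conjV x₀ lam u x ^ 2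
        - 2 * lam ^ 2 * n ^ 2 * conjV x₀ lam u x ^ 2
        + ∑ j, pd j (ellF x₀ lam u j) x
        + (∑ j, pd j (pd j (conjV x₀ lam u)) x
            + lam ^ 2 * (∑ j, (x j - x₀ j) ^ 2) * conjV x₀ lam u x) ^ 2
        + (2 * lam * ∑ j, (x j - x₀ j) * pd j (conjV x₀ lam u) x) ^ 2
        + (lam * n * conjV x₀ lam u x) ^ 2 := by
  have hsq : Real.exp (2 * lam * phi x₀ x) * (∑ j, pd j (pd j u) x) ^ 2
      = (Real.exp (lam * phi x₀ x) * ∑ j, pd j (pd j u) x) ^ 2 := by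
    rw [mul_pow, ← Real.exp_nat_mul]
    congr 2
    push_cast
    ring
  rw [hsq, exp_mul_laplacian_eq x₀ lam hu, sum_pd_ellF x₀ lam (contDiff_conjV x₀ lam hu)]
  ring

theorem carleman_estimate (hu : ContDiff ℝ 2 u) (x : Fin n → ℝ) :
    4 * lam * ∑ j, pd j (conjV x₀ lam u) x ^ 2
        + 4 * lam ^ 3 * (∑ j, (x j - x₀ j) ^ 2) * conjV x₀ lam u x ^ 2
        - 2 * lam ^ 2 * n ^ 2 * conjV x₀ lam u x ^ 2
        + ∑ j, pd j (ellF x₀ lam u j) x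
      ≤ Real.exp (2 * lam * phi x₀ x) * (∑ j, pd j (pd j u) x) ^ 2 := by
  rw [carleman_identity x₀ lam hu x]
  linarith [sq_nonneg (∑ j, pd j (pd j (conjV x₀ lam u)) x
      + lam ^ 2 * (∑ j, (x j - x₀ j) ^ 2) * conjV x₀ lam u x),
    sq_nonneg (2 * lam * ∑ j, (x j - x₀ j) * pd j (conjV x₀ lam u) x),
    sq_nonneg (lam * n * conjV x₀ lam u x)]

end CarlemanField

theorem elliptic_pointwise_carleman_general {n : ℕ}
    (x₀ : Fin n → ℝ) (lam : ℝ) (u : (Fin n → ℝ) → ℝ) (hu : ContDiff ℝ 2 u) :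
    (∀ x : Fin n → ℝ,
      Real.exp (2 * lam * phi x₀ x) * (∑ j, pd j (pd j u) x) ^ 2 ≥
        4 * lam * (∑ j, (pd j (conjV x₀ lam u) x) ^ 2)
          + 4 * lam ^ 3 * (∑ j, (x j - x₀ j) ^ 2) * (conjV x₀ lam u x) ^ 2
          - 2 * lam ^ 2 * (n : ℝ) ^ 2 * (conjV x₀ lam u x) ^ 2
          + ∑ j, pd j (ellF x₀ lam u j) x)
    ∧ ((n : ℝ) ^ 2 ≤ lam →
        ∀ x : Fin n → ℝ, 1 ≤ Real.sqrt (∑ j, (x j - x₀ j) ^ 2) →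
          Real.exp (2 * lam * phi x₀ x) * (∑ j, pd j (pd j u) x) ^ 2 ≥
            4 * lam * (∑ j, (pd j (conjV x₀ lam u) x) ^ 2)
              + 2 * lam ^ 3 * (conjV x₀ lam u x) ^ 2
              + ∑ j, pd j (ellF x₀ lam u j) x) := by
  refine ⟨carleman_estimate x₀ lam hu, fun hlam x hx => (carleman_estimate x₀ lam hu x).trans' ?_⟩
  have hR : 0 ≤ ∑ j, (x j - x₀ j) ^ 2 - 1 :=
    sub_nonneg.2 (by simpa using (Real.le_sqrt' one_pos).1 hx)
  have hlam0 : 0 ≤ lam := (sq_nonneg _).trans hlam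
  have hlam' : 0 ≤ lam - n ^ 2 := sub_nonneg.2 hlam
  have hgain : 0 ≤ 4 * lam ^ 3 * (∑ j, (x j - x₀ j) ^ 2 - 1) * conjV x₀ lam u x ^ 2
      + 2 * lam ^ 2 * (lam - n ^ 2) * conjV x₀ lam u x ^ 2 := by
    positivity
  linarith

/-- exact pointwise form of the elliptic Carleman estimate
underlying Lemma 2.5 of the paper, i.e. Proposition 2.3 specialized to
`a^{jk} = δ^{jk}`, `ℓ = λφ` with `φ(x) = ½|x−x₀|²`, and `ℓ̃ = 0`. -/
theorem elliptic_pointwise_carleman {n : ℕ} (hn : 1 ≤ n)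
    (x₀ : Fin n → ℝ) (lam : ℝ) (u : (Fin n → ℝ) → ℝ) (hu : ContDiff ℝ 2 u) :
    (∀ x : Fin n → ℝ,
      Real.exp (2 * lam * phi x₀ x) * (∑ j, pd j (pd j u) x) ^ 2 ≥
        4 * lam * (∑ j, (pd j (conjV x₀ lam u) x) ^ 2)
          + 4 * lam ^ 3 * (∑ j, (x j - x₀ j) ^ 2) * (conjV x₀ lam u x) ^ 2
          - 2 * lam ^ 2 * (n : ℝ) ^ 2 * (conjV x₀ lam u x) ^ 2
          + ∑ j, pd j (ellF x₀ lam u j) x)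
    ∧ ((n : ℝ) ^ 2 ≤ lam →
        ∀ x : Fin n → ℝ, 1 ≤ Real.sqrt (∑ j, (x j - x₀ j) ^ 2) →
          Real.exp (2 * lam * phi x₀ x) * (∑ j, pd j (pd j u) x) ^ 2 ≥
            4 * lam * (∑ j, (pd j (conjV x₀ lam u) x) ^ 2)
              + 2 * lam ^ 3 * (conjV x₀ lam u x) ^ 2
              + ∑ j, pd j (ellF x₀ lam u j) x) :=
  elliptic_pointwise_carleman_general x₀ lam u hu
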